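/- arXiv:math/0407041 — 5 statements merged into one kernel-verified Lean document; each statement's English description precedes it below -/
import Mathlib

section
/- Let S be a noetherian ℕ^r-graded algebra over a field k with S₀ = k and homogeneous maximal ideal 𝓜 (the ideal of all elements of nonzero degree). Let ⋯ → D_{p+1} → D_p → ⋯ → D₁ → D₀ → 0 be an exact sequence of finitely generated ℤ^r-graded S-modules such that the image of D_{p+1} → D_p is contained in 𝓜·D_p for all p ≥ 0. For each p let {v_{pq}} ⊆ ℤ^r be the multiset of degrees of a minimal homogeneous generating system of D_p, let n_p ∈ ℤ^r be the componentwise minimum of the v_{pq}, and let m_p be the minimum of the v_{pq} in the lexicographic order. Then for every p: (i) n_p ≤ n_{p+1} componentwise, and (ii) m_p <_lex m_{p+1} strictly in the lexicographic order. -/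
/-!
Let `x ∈ (D_{p+1})_{v'}` lie outside `𝓜 D_{p+1}`. Since the image of `f_{p+1}` lies in
`𝓜 D_{p+1}`, exactness makes `y = f_p x` a nonzero element of `(D_p)_{v'} ∩ 𝓜 D_p`. A graded
Nakayama argument then produces a degree `v < v'` with `(D_p)_v ⊄ 𝓜 D_p`, and `v < v'` gives
both claims at once. For the Nakayama step: the degree-`u` part of `𝓜 D` is spanned by products
of positive-degree scalars with elements of degree `< u`. The degrees in which a finitely
generated module lives form a finite union of sets `Ici c`, hence a well-founded set, so if every
`(D_p)_v` with `v < v'` lay in `𝓜 D_p`, a minimal nonzero such degree would give a contradiction,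
and then `y` itself would vanish.
-/

open DirectSum

section Grading

variable {ι S M : Type*} [AddCommGroup ι] [DecidableEq ι] [CommRing S]
  [AddCommGroup M] [Module S M]
  {𝒜 : ι → AddSubgroup S} {ℳ : ι → AddSubgroup M} [Decomposition ℳ]

theorem decompose_smul_of_mem (hsmul : ∀ v w, ∀ s ∈ 𝒜 v, ∀ t ∈ ℳ w, s • t ∈ ℳ (v + w))
    {s : S} {w : ι} (hs : s ∈ 𝒜 w) (m : M) (u : ι) :
    (decompose ℳ (s • m) u : M) = s • (decompose ℳ m (u - w) : M) := by
  classical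
  induction m using Decomposition.inductionOn ℳ with
  | zero => simp
  | @homogeneous i m =>
    have hsm := hsmul w i s hs m m.2
    by_cases hi : i = u - w
    · subst hi
      rw [add_sub_cancel] at hsm
      rw [decompose_of_mem_same ℳ m.2, decompose_of_mem_same ℳ hsm]
    · rw [decompose_of_mem_ne ℳ m.2 hi, smul_zero, decompose_of_mem_ne ℳ hsm]
      rintro rfl
      exact hi (add_sub_cancel_left w i).symm
  | add m m' hm hm' =>
    rw [smul_add, decompose_add, decompose_add, DirectSum.add_apply, DirectSum.add_apply,
      AddSubgroup.coe_add, AddSubgroup.coe_add, hm, hm', smul_add]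

variable [PartialOrder ι] [IsOrderedAddMonoid ι]

theorem decompose_eq_zero_of_mem_smul_top (hsupp : ∀ v, ¬ 0 ≤ v → 𝒜 v = ⊥)
    (hsmul : ∀ v w, ∀ s ∈ 𝒜 v, ∀ t ∈ ℳ w, s • t ∈ ℳ (v + w)) {𝓜 : Ideal S}
    (h𝓜 : 𝓜 ≤ Ideal.span (⋃ (v : ι) (_ : v ≠ 0), (𝒜 v : Set S))) {u : ι}
    (hbelow : ∀ u' < u, ℳ u' = ⊥) {x : M} (hx : x ∈ 𝓜 • (⊤ : Submodule S M)) :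
    (decompose ℳ x u : M) = 0 := by
  have hgen : ∀ a ∈ Ideal.span (⋃ (v : ι) (_ : v ≠ 0), (𝒜 v : Set S)), ∀ n : M,
      (decompose ℳ (a • n) u : M) = 0 := by
    intro a ha
    induction ha using Submodule.span_induction with
    | mem s hs =>
      obtain ⟨w, hw, hsw⟩ := Set.mem_iUnion₂.mp hs
      intro n
      by_cases hw0 : 0 ≤ w
      · have hlt : u - w < u := sub_lt_self u (lt_of_le_of_ne hw0 (Ne.symm hw))
        have hcomp := AddSubgroup.mem_bot.mp ((hbelow _ hlt).le (decompose ℳ n (u - w)).2)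
        rw [decompose_smul_of_mem hsmul hsw, hcomp, smul_zero]
      · rw [hsupp w hw0, SetLike.mem_coe, AddSubgroup.mem_bot] at hsw
        rw [hsw, zero_smul, decompose_zero, DirectSum.zero_apply, ZeroMemClass.coe_zero]
    | zero => simp
    | add a b _ _ ha hb =>
      intro n
      rw [add_smul, decompose_add, DirectSum.add_apply, AddSubgroup.coe_add, ha, hb, add_zero]
    | smul a b _ hb =>
      intro n
      rw [smul_eq_mul, mul_comm, mul_smul]
      exact hb _
  refine Submodule.smul_induction_on hx (fun a ha n _ ↦ hgen a (h𝓜 ha) n) fun x y hx hy ↦ ?_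
  rw [decompose_add, DirectSum.add_apply, AddSubgroup.coe_add, hx, hy, add_zero]

theorem decompose_smul_eq_zero_of_notMem [Decomposition 𝒜] (hsupp : ∀ v, ¬ 0 ≤ v → 𝒜 v = ⊥)
    (hsmul : ∀ v w, ∀ s ∈ 𝒜 v, ∀ t ∈ ℳ w, s • t ∈ ℳ (v + w)) {U : Set ι} (hU : IsUpperSet U)
    {x : M} (hx : ∀ u ∉ U, (decompose ℳ x u : M) = 0) (a : S) :
    ∀ u ∉ U, (decompose ℳ (a • x) u : M) = 0 := by
  induction a using Decomposition.inductionOn 𝒜 with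
  | zero => simp
  | @homogeneous w a =>
    intro u hu
    rw [decompose_smul_of_mem hsmul a.2]
    by_cases hw : 0 ≤ w
    · rw [hx (u - w) fun h ↦ hu (hU (sub_le_self u hw) h), smul_zero]
    · rw [AddSubgroup.mem_bot.mp ((hsupp w hw).le a.2), zero_smul]
  | add a b ha hb =>
    intro u hu
    rw [add_smul, decompose_add, DirectSum.add_apply, AddSubgroup.coe_add, ha u hu, hb u hu,
      add_zero]

theorem exists_finset_eq_bot_of_notMem_upperClosure [Decomposition 𝒜] [Module.Finite S M]
    (hsupp : ∀ v, ¬ 0 ≤ v → 𝒜 v = ⊥)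
    (hsmul : ∀ v w, ∀ s ∈ 𝒜 v, ∀ t ∈ ℳ w, s • t ∈ ℳ (v + w)) :
    ∃ F : Finset ι, ∀ u ∉ upperClosure (F : Set ι), ℳ u = ⊥ := by
  classical
  obtain ⟨T, hT⟩ := Module.Finite.fg_top (R := S) (M := M)
  refine ⟨T.sup fun t ↦ (decompose ℳ t).support, fun u hu ↦ ?_⟩
  have hall : ∀ x ∈ Submodule.span S (T : Set M), ∀ u ∉ upperClosure
      ((T.sup fun t ↦ (decompose ℳ t).support : Finset ι) : Set ι),
      (decompose ℳ x u : M) = 0 := by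
    intro x hx
    induction hx using Submodule.span_induction with
    | mem t ht =>
      intro u hu
      by_contra h
      exact hu (subset_upperClosure (Finset.mem_sup.mpr ⟨t, ht, by simpa using h⟩))
    | zero => simp
    | add x y _ _ hx hy =>
      intro u hu
      rw [decompose_add, DirectSum.add_apply, AddSubgroup.coe_add, hx u hu, hy u hu, add_zero]
    | smul a x _ hx =>
      exact decompose_smul_eq_zero_of_notMem hsupp hsmul (upperClosure _).upper hx a
  rw [eq_bot_iff]
  intro m hm
  rw [AddSubgroup.mem_bot, ← decompose_of_mem_same ℳ hm]
  exact hall m (hT ▸ Submodule.mem_top) u hu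

variable [LocallyFiniteOrder ι] [Decomposition 𝒜] [Module.Finite S M]

theorem isWF_setOf_ne_bot (hsupp : ∀ v, ¬ 0 ≤ v → 𝒜 v = ⊥)
    (hsmul : ∀ v w, ∀ s ∈ 𝒜 v, ∀ t ∈ ℳ w, s • t ∈ ℳ (v + w)) :
    {u | ℳ u ≠ ⊥}.IsWF := by
  obtain ⟨F, hF⟩ := exists_finset_eq_bot_of_notMem_upperClosure hsupp hsmul
  refine Set.IsWF.mono ?_ fun u hu ↦ not_not.mp (mt (hF u) hu)
  rw [coe_upperClosure]
  exact (Finset.wellFoundedOn_bUnion F).mpr fun a _ ↦ bddBelow_Ici.wellFoundedOn_lt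

theorem eq_bot_of_forall_lt_subset_smul_top (hsupp : ∀ v, ¬ 0 ≤ v → 𝒜 v = ⊥)
    (hsmul : ∀ v w, ∀ s ∈ 𝒜 v, ∀ t ∈ ℳ w, s • t ∈ ℳ (v + w)) {𝓜 : Ideal S}
    (h𝓜 : 𝓜 ≤ Ideal.span (⋃ (v : ι) (_ : v ≠ 0), (𝒜 v : Set S))) {v : ι}
    (H : ∀ u < v, (ℳ u : Set M) ⊆ ((𝓜 • (⊤ : Submodule S M) : Submodule S M) : Set M)) :
    ∀ u < v, ℳ u = ⊥ := by
  by_contra! hne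
  obtain ⟨u, hmin⟩ := ((isWF_setOf_ne_bot hsupp hsmul).mono fun u (hu : ℳ u ≠ ⊥ ∧ u < v) ↦
    hu.1).exists_minimal (let ⟨u, huv, hu⟩ := hne; ⟨u, hu, huv⟩)
  obtain ⟨hu, huv⟩ := hmin.prop
  refine hu (eq_bot_iff.mpr fun m hm ↦ AddSubgroup.mem_bot.mpr ?_)
  rw [← decompose_of_mem_same ℳ hm]
  refine decompose_eq_zero_of_mem_smul_top hsupp hsmul h𝓜 (fun u' hu' ↦ ?_) (H u huv hm)
  by_contra hu'0
  exact hmin.not_lt ⟨hu'0, hu'.trans huv⟩ hu'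

theorem exists_lt_not_subset_smul_top (hsupp : ∀ v, ¬ 0 ≤ v → 𝒜 v = ⊥)
    (hsmul : ∀ v w, ∀ s ∈ 𝒜 v, ∀ t ∈ ℳ w, s • t ∈ ℳ (v + w)) {𝓜 : Ideal S}
    (h𝓜 : 𝓜 ≤ Ideal.span (⋃ (v : ι) (_ : v ≠ 0), (𝒜 v : Set S))) {v : ι} {y : M}
    (hy : y ∈ ℳ v) (hy𝓜 : y ∈ 𝓜 • (⊤ : Submodule S M)) (hy0 : y ≠ 0) :
    ∃ u < v, ¬ (ℳ u : Set M) ⊆ ((𝓜 • (⊤ : Submodule S M) : Submodule S M) : Set M) := by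
  by_contra! H
  refine hy0 ?_
  rw [← decompose_of_mem_same ℳ hy]
  exact decompose_eq_zero_of_mem_smul_top hsupp hsmul h𝓜
    (eq_bot_of_forall_lt_subset_smul_top hsupp hsmul h𝓜 H) hy𝓜

end Grading

theorem stmt1_general {S : Type*} [CommRing S]
    (r : ℕ) (𝒜 : (Fin r → ℤ) → AddSubgroup S) [GradedRing 𝒜]
    (hsupp : ∀ v : Fin r → ℤ, (∃ j, v j < 0) → 𝒜 v = ⊥)
    (𝓜 : Ideal S)
    (h𝓜 : 𝓜 = Ideal.span (⋃ (v : Fin r → ℤ) (_ : v ≠ 0), (𝒜 v : Set S)))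
    (D : ℕ → Type*) [∀ p, AddCommGroup (D p)] [∀ p, Module S (D p)]
    [∀ p, Module.Finite S (D p)]
    (ℳ : ∀ p, (Fin r → ℤ) → AddSubgroup (D p))
    [∀ p, DirectSum.Decomposition (ℳ p)]
    (hsmul : ∀ (p : ℕ) (v w : Fin r → ℤ), ∀ s ∈ 𝒜 v, ∀ t ∈ ℳ p w, s • t ∈ ℳ p (v + w))
    (f : ∀ p : ℕ, D (p + 1) →ₗ[S] D p)
    (hgradedf : ∀ (p : ℕ) (v : Fin r → ℤ), ∀ t ∈ ℳ (p + 1) v, f p t ∈ ℳ p v)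
    (hexact : ∀ p : ℕ, Function.Exact (f (p + 1)) (f p))
    (him : ∀ p : ℕ, LinearMap.range (f p) ≤ 𝓜 • (⊤ : Submodule S (D p)))
    (V : ℕ → Set (Fin r → ℤ))
    (hV : ∀ p, V p = {v | ¬ (ℳ p v : Set (D p)) ⊆
      ((𝓜 • (⊤ : Submodule S (D p)) : Submodule S (D p)) : Set (D p))}) :
    ∀ p : ℕ,
      (∀ v' ∈ V (p + 1), ∀ j : Fin r, ∃ v ∈ V p, v j ≤ v' j) ∧
      (∀ v' ∈ V (p + 1), ∃ v ∈ V p, toLex v < toLex v') := by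
  intro p
  have hsupp' : ∀ v, ¬ 0 ≤ v → 𝒜 v = ⊥ := fun v hv ↦ hsupp v (by simpa [Pi.le_def] using hv)
  have hlt : ∀ v' ∈ V (p + 1), ∃ v ∈ V p, v < v' := by
    intro v' hv'
    rw [hV] at hv'
    obtain ⟨x, hx, hx𝓜⟩ := Set.not_subset.mp hv'
    have hfx : f p x ≠ 0 := fun h ↦ hx𝓜 (him (p + 1) ((hexact p x).mp h))
    obtain ⟨v, hvv', hv⟩ := exists_lt_not_subset_smul_top hsupp' (hsmul p) h𝓜.le
      (hgradedf p v' x hx) (him p ⟨x, rfl⟩) hfx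
    exact ⟨v, by rw [hV]; exact hv, hvv'⟩
  refine ⟨fun v' hv' j ↦ ?_, fun v' hv' ↦ ?_⟩
  · obtain ⟨v, hv, hvv'⟩ := hlt v' hv'
    exact ⟨v, hv, hvv'.le j⟩
  · obtain ⟨v, hv, hvv'⟩ := hlt v' hv'
    exact ⟨v, hv, Pi.toLex_strictMono hvv'⟩

/-- Let `S` be a noetherian ℕʳ-graded algebra over a field `k` with `S₀ = k`, homogeneous
maximal ideal `𝓜` (generated by the elements of nonzero degree), and let
`⋯ → D_{p+1} → D_p → ⋯ → D₁ → D₀` be an exact sequence of finitely generated ℤʳ-graded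
`S`-modules with `Im(D_{p+1} → D_p) ⊆ 𝓜·D_p`.  Let `V p` be the set of degrees of a
minimal homogeneous generating system of `D_p` (the degrees `v` where `(D_p/𝓜D_p)_v ≠ 0`,
i.e. `(D_p)_v ⊄ 𝓜D_p`).  Then the componentwise minima satisfy `n_p ≤ n_{p+1}` and the
lexicographic minima satisfy `m_p <_lex m_{p+1}`; equivalently, every `v' ∈ V (p+1)`
dominates some element of `V p` in each coordinate, and strictly dominates some element of
`V p` lexicographically. -/
theorem stmt1 {k S : Type*} [Field k] [CommRing S] [Algebra k S] [IsNoetherianRing S]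
    (r : ℕ) (𝒜 : (Fin r → ℤ) → AddSubgroup S) [GradedRing 𝒜]
    (hsupp : ∀ v : Fin r → ℤ, (∃ j, v j < 0) → 𝒜 v = ⊥)
    (hzero : (𝒜 (0 : Fin r → ℤ) : Set S) = Set.range (algebraMap k S))
    (𝓜 : Ideal S)
    (h𝓜 : 𝓜 = Ideal.span (⋃ (v : Fin r → ℤ) (_ : v ≠ 0), (𝒜 v : Set S)))
    (D : ℕ → Type*) [∀ p, AddCommGroup (D p)] [∀ p, Module S (D p)]
    [∀ p, Module.Finite S (D p)]
    (ℳ : ∀ p, (Fin r → ℤ) → AddSubgroup (D p))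
    [∀ p, DirectSum.Decomposition (ℳ p)]
    (hsmul : ∀ (p : ℕ) (v w : Fin r → ℤ), ∀ s ∈ 𝒜 v, ∀ t ∈ ℳ p w, s • t ∈ ℳ p (v + w))
    (f : ∀ p : ℕ, D (p + 1) →ₗ[S] D p)
    (hgradedf : ∀ (p : ℕ) (v : Fin r → ℤ), ∀ t ∈ ℳ (p + 1) v, f p t ∈ ℳ p v)
    (hexact : ∀ p : ℕ, Function.Exact (f (p + 1)) (f p))
    (him : ∀ p : ℕ, LinearMap.range (f p) ≤ 𝓜 • (⊤ : Submodule S (D p)))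
    (V : ℕ → Set (Fin r → ℤ))
    (hV : ∀ p, V p = {v | ¬ (ℳ p v : Set (D p)) ⊆
      ((𝓜 • (⊤ : Submodule S (D p)) : Submodule S (D p)) : Set (D p))}) :
    ∀ p : ℕ,
      (∀ v' ∈ V (p + 1), ∀ j : Fin r, ∃ v ∈ V p, v j ≤ v' j) ∧
      (∀ v' ∈ V (p + 1), ∃ v ∈ V p, toLex v < toLex v') :=
  stmt1_general r 𝒜 hsupp 𝓜 h𝓜 D ℳ hsmul f hgradedf hexact him V hV
end

section
/- Let A = ⊕_{n≥0} A_n be a graded ring generated as an A₀-algebra by A₁, and let I ⊆ A be a homogeneous ideal generated by homogeneous elements of degree at most d. Then for every m ≥ 1 and every integer b ≥ dm one has (I^m)_{b+1} = A₁ · (I^m)_b, where (I^m)_b denotes the degree-b homogeneous component of I^m. -/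
/-!
If `A` is generated in degree one, a homogeneous element of degree `k + 1` is a sum of products
`u * v` with `u ∈ A₁` and `v ∈ A_k`; so `g * f` with `f ∈ J` homogeneous of degree `e` lies in
`A₁ · (J)_{k+e}`. Now let `J` be spanned by homogeneous elements of degree at most `b`. The
degree-`(b+1)` part of `c * s`, with `s` a generator of degree `e ≤ b`, is `c_{b+1-e} * s`, and
`b + 1 - e ≥ 1`, so it lies in `A₁ · J_b`; hence so does every element of `J_{b+1}`. Finally
`Iᵐ` is spanned by the products of `m` generators of `I`, which are homogeneous of degree
at most `dm ≤ b`.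
-/

section GradedMonoid

open Pointwise

variable {A σ : Type*} [Monoid A] [SetLike σ A] (𝒜 : ℕ → σ) [SetLike.GradedMonoid 𝒜]

theorem exists_mem_graded_le_of_mem_pow {T : Set A} {d : ℕ} (hT : ∀ f ∈ T, ∃ i ≤ d, f ∈ 𝒜 i) :
    ∀ (n : ℕ) {f : A}, f ∈ T ^ n → ∃ e ≤ d * n, f ∈ 𝒜 e
  | 0, f, hf => by
    rw [pow_zero, Set.mem_one] at hf
    exact ⟨0, le_rfl, hf ▸ SetLike.GradedOne.one_mem⟩
  | n + 1, _, hf => by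
    obtain ⟨g, hg, t, ht, rfl⟩ := Set.mem_mul.mp (pow_succ T n ▸ hf)
    obtain ⟨e, he, hge⟩ := exists_mem_graded_le_of_mem_pow hT n hg
    obtain ⟨i, hi, hti⟩ := hT t ht
    exact ⟨e + i, by rw [mul_add_one]; omega, SetLike.mul_mem_graded hge hti⟩

end GradedMonoid

section GradedRing

variable {A : Type*} [Ring A] (𝒜 : ℕ → AddSubgroup A) [GradedRing 𝒜]

theorem closure_image2_degOne_le (J : Ideal A) (b : ℕ) :
    AddSubgroup.closure (Set.image2 (· * ·) (𝒜 1 : Set A) ((J.toAddSubgroup ⊓ 𝒜 b : _) : Set A))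
      ≤ J.toAddSubgroup ⊓ 𝒜 (b + 1) := by
  rw [AddSubgroup.closure_le]
  rintro _ ⟨u, hu, v, ⟨hvJ, hvb⟩, rfl⟩
  exact ⟨J.mul_mem_left u hvJ, add_comm 1 b ▸ SetLike.mul_mem_graded hu hvb⟩

variable {𝒜}
variable (hstd : ∀ n : ℕ, 𝒜 (n + 1) =
  AddSubgroup.closure (Set.image2 (· * ·) (𝒜 1 : Set A) (𝒜 n : Set A)))
include hstd

theorem mul_mem_closure_image2_degOne {J : Ideal A} {k e : ℕ} {g f : A} (hg : g ∈ 𝒜 (k + 1))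
    (hfJ : f ∈ J) (hfe : f ∈ 𝒜 e) :
    g * f ∈ AddSubgroup.closure
      (Set.image2 (· * ·) (𝒜 1 : Set A) ((J.toAddSubgroup ⊓ 𝒜 (k + e) : _) : Set A)) := by
  rw [hstd k] at hg
  induction hg using AddSubgroup.closure_induction with
  | mem x hx =>
    obtain ⟨u, hu, v, hv, rfl⟩ := hx
    rw [mul_assoc]
    exact AddSubgroup.subset_closure
      ⟨u, hu, v * f, ⟨J.mul_mem_left v hfJ, SetLike.mul_mem_graded hv hfe⟩, rfl⟩
  | zero => rw [zero_mul]; exact zero_mem _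
  | add x y _ _ hx hy => rw [add_mul]; exact add_mem hx hy
  | neg x _ hx => rw [neg_mul]; exact neg_mem hx

theorem proj_succ_mul_mem_closure_image2_degOne {J : Ideal A} {b e : ℕ} (heb : e ≤ b) (c : A)
    {f : A} (hfJ : f ∈ J) (hfe : f ∈ 𝒜 e) :
    GradedRing.proj 𝒜 (b + 1) (c * f) ∈ AddSubgroup.closure
      (Set.image2 (· * ·) (𝒜 1 : Set A) ((J.toAddSubgroup ⊓ 𝒜 b : _) : Set A)) := by
  rw [GradedRing.proj_apply, DirectSum.coe_decompose_mul_of_right_mem_of_le 𝒜 hfe (by omega),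
    show b + 1 - e = b - e + 1 by omega]
  convert mul_mem_closure_image2_degOne hstd (SetLike.coe_mem _) hfJ hfe using 6
  omega

theorem inf_succ_eq_closure_image2_of_span {S : Set A} {b : ℕ}
    (hS : ∀ s ∈ S, ∃ e ≤ b, s ∈ 𝒜 e) :
    (Ideal.span S).toAddSubgroup ⊓ 𝒜 (b + 1) = AddSubgroup.closure
      (Set.image2 (· * ·) (𝒜 1 : Set A) (((Ideal.span S).toAddSubgroup ⊓ 𝒜 b : _) : Set A)) := by
  -- Quantifying over the left factor `c` makes the predicate stable under `smul`.
  have hproj : ∀ x ∈ Ideal.span S, ∀ c : A, GradedRing.proj 𝒜 (b + 1) (c * x) ∈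
      AddSubgroup.closure (Set.image2 (· * ·) (𝒜 1 : Set A)
        (((Ideal.span S).toAddSubgroup ⊓ 𝒜 b : _) : Set A)) := by
    intro x hx
    induction hx using Submodule.span_induction with
    | mem s hs =>
      obtain ⟨e, heb, hse⟩ := hS s hs
      exact fun c => proj_succ_mul_mem_closure_image2_degOne hstd heb c (Ideal.subset_span hs) hse
    | zero => simp
    | add y z _ _ hy hz => simpa only [mul_add, map_add] using fun c => add_mem (hy c) (hz c)
    | smul a y _ hy => simpa only [smul_eq_mul, ← mul_assoc] using fun c => hy (c * a)
  refine le_antisymm (fun x ⟨hxJ, hxb⟩ => ?_) (closure_image2_degOne_le 𝒜 _ b)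
  simpa [GradedRing.proj_apply, DirectSum.decompose_of_mem_same 𝒜 hxb] using hproj x hxJ 1

end GradedRing

theorem stmt3_general {A : Type*} [CommRing A]
    (𝒜 : ℕ → AddSubgroup A) [GradedRing 𝒜]
    (hstd : ∀ n : ℕ, 𝒜 (n + 1) =
      AddSubgroup.closure (Set.image2 (· * ·) (𝒜 1 : Set A) (𝒜 n : Set A)))
    (I : Ideal A) (d : ℕ) (T : Set A)
    (hspan : I = Ideal.span T)
    (hT : ∀ f ∈ T, ∃ i ≤ d, f ∈ 𝒜 i)
    (m : ℕ) (b : ℕ) (hb : d * m ≤ b) :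
    (I ^ m).toAddSubgroup ⊓ 𝒜 (b + 1) =
      AddSubgroup.closure
        (Set.image2 (· * ·) (𝒜 1 : Set A)
          (((I ^ m).toAddSubgroup ⊓ 𝒜 b : AddSubgroup A) : Set A)) := by
  rw [hspan, Ideal.span, Submodule.span_pow]
  refine inf_succ_eq_closure_image2_of_span hstd fun f hf => ?_
  obtain ⟨e, he, hfe⟩ := exists_mem_graded_le_of_mem_pow 𝒜 hT m hf
  exact ⟨e, he.trans hb, hfe⟩

/-- If `A = ⊕ₙ Aₙ` is a graded ring generated as an `A₀`-algebra by `A₁` and `I` is an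
ideal generated by homogeneous elements of degree at most `d`, then for every `m ≥ 1` and
every `b ≥ dm` one has `(Iᵐ)_{b+1} = A₁ · (Iᵐ)_b`. -/
theorem stmt3 {A : Type*} [CommRing A]
    (𝒜 : ℕ → AddSubgroup A) [GradedRing 𝒜]
    (hstd : ∀ n : ℕ, 𝒜 (n + 1) =
      AddSubgroup.closure (Set.image2 (· * ·) (𝒜 1 : Set A) (𝒜 n : Set A)))
    (I : Ideal A) (d : ℕ) (T : Set A)
    (hspan : I = Ideal.span T)
    (hT : ∀ f ∈ T, ∃ i ≤ d, f ∈ 𝒜 i)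
    (m : ℕ) (hm : 1 ≤ m) (b : ℕ) (hb : d * m ≤ b) :
    (I ^ m).toAddSubgroup ⊓ 𝒜 (b + 1) =
      AddSubgroup.closure
        (Set.image2 (· * ·) (𝒜 1 : Set A)
          (((I ^ m).toAddSubgroup ⊓ 𝒜 b : AddSubgroup A) : Set A)) :=
  stmt3_general 𝒜 hstd I d T hspan hT m b hb
end

section
/- Let k be a field and S = k[X₁,…,Xₙ,Y₁,…,Y_r] the polynomial ring bigraded by deg X_i = (1,0) and deg Y_j = (d_j,1) with d_j ≥ 0, and set d = max_j d_j. Let L be a finitely generated bigraded S-module and suppose (S₊)^u · L = 0 for some u ≥ 0, where S₊ is the ideal generated by all products X_iY_j. Then there exist integers m₁, m₂ such that L_{(p,q)} = 0 whenever p > dq + m₁ and q > m₂. -/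
/-!
Decompose finitely many generators of `L` into bihomogeneous pieces `g_v`; their bidegrees `v`
form a finite set. An element of `L_{(p,q)}` is a sum of terms `s • g_v` with `s`
bihomogeneous of bidegree `(p,q) - v`. A monomial of bidegree `(a,b)` has `b` factors `Yⱼ` and,
as `dⱼ ≤ d`, at least `a - d b` factors `Xᵢ`, so it lies in `S₊^u` as soon as `b ≥ u` and
`a ≥ d b + u`. Once `q` and `p - d q` are large compared with the finitely many `v`, every such
`s` lies in `S₊^u` and therefore kills `L`.
-/

open MvPolynomial

lemma Finsupp.exists_ne_zero_of_weight_ne_zero {σ : Type*} {w : σ → ℕ} {s : σ →₀ ℕ}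
    (h : Finsupp.weight w s ≠ 0) : ∃ a, s a ≠ 0 ∧ w a ≠ 0 := by
  obtain ⟨a, -, ha⟩ := Finset.exists_ne_zero_of_sum_ne_zero h
  exact ⟨a, left_ne_zero_of_mul ha, right_ne_zero_of_mul ha⟩

namespace MvPolynomial

variable {R ι κ : Type*} [CommSemiring R]

variable (R ι κ) in
noncomputable def irrelevantIdeal : Ideal (MvPolynomial (ι ⊕ κ) R) :=
  Ideal.span {f | ∃ i j, f = X (Sum.inl i) * X (Sum.inr j)}

def bidegreeWeight (dvec : κ → ℕ) : ι ⊕ κ → ℕ × ℕ :=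
  Sum.elim (fun _ => (1, 0)) (fun j => (dvec j, 1))

lemma monomial_mem_irrelevantIdeal_pow (u : ℕ) (s : ι ⊕ κ →₀ ℕ)
    (hX : u ≤ Finsupp.weight (Sum.elim 1 0) s) (hY : u ≤ Finsupp.weight (Sum.elim 0 1) s)
    (c : R) : monomial s c ∈ irrelevantIdeal R ι κ ^ u := by
  induction u generalizing s with
  | zero => simp [Ideal.one_eq_top]
  | succ u ih =>
    obtain ⟨i, hi⟩ : ∃ i, s (Sum.inl i) ≠ 0 := by
      obtain ⟨i | _, hi, hw⟩ :=
        Finsupp.exists_ne_zero_of_weight_ne_zero (s := s) (w := Sum.elim 1 0) (by omega)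
      exacts [⟨i, hi⟩, absurd rfl hw]
    obtain ⟨j, hj⟩ : ∃ j, s (Sum.inr j) ≠ 0 := by
      obtain ⟨_ | j, hj, hw⟩ :=
        Finsupp.exists_ne_zero_of_weight_ne_zero (s := s) (w := Sum.elim 0 1) (by omega)
      exacts [absurd rfl hw, ⟨j, hj⟩]
    have hX₁ := Finsupp.weight_sub_single_add (w := (Sum.elim 1 0 : ι ⊕ κ → ℕ)) hi
    have hY₁ := Finsupp.weight_sub_single_add (w := (Sum.elim 0 1 : ι ⊕ κ → ℕ)) hi
    set s₁ := s - Finsupp.single (Sum.inl i) 1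
    have hj₁ : s₁ (Sum.inr j) ≠ 0 := by simpa [s₁] using hj
    have hX₂ := Finsupp.weight_sub_single_add (w := (Sum.elim 1 0 : ι ⊕ κ → ℕ)) hj₁
    have hY₂ := Finsupp.weight_sub_single_add (w := (Sum.elim 0 1 : ι ⊕ κ → ℕ)) hj₁
    set s₂ := s₁ - Finsupp.single (Sum.inr j) 1
    simp only [Sum.elim_inl, Sum.elim_inr, Pi.one_apply, Pi.zero_apply] at hX₁ hY₁ hX₂ hY₂
    have hs : Finsupp.single (Sum.inl i) 1 + Finsupp.single (Sum.inr j) 1 + s₂ = s := by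
      rw [add_comm, ← add_assoc, add_right_comm, Finsupp.sub_add_single_one_cancel hj₁,
        Finsupp.sub_add_single_one_cancel hi]
    have hmonomial : monomial s c = X (Sum.inl i) * X (Sum.inr j) * monomial s₂ c := by
      rw [← hs, X, X, monomial_mul, monomial_mul, one_mul, one_mul]
    rw [hmonomial, pow_succ']
    exact Ideal.mul_mem_mul (Ideal.subset_span ⟨i, j, rfl⟩) (ih s₂ (by omega) (by omega))

lemma weight_bidegreeWeight_snd (dvec : κ → ℕ) (s : ι ⊕ κ →₀ ℕ) :
    (Finsupp.weight (bidegreeWeight dvec) s).2 = Finsupp.weight (Sum.elim 0 1) s := by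
  simp only [Finsupp.weight_apply, Finsupp.sum, Prod.snd_sum, Prod.smul_snd]
  refine Finset.sum_congr rfl fun a _ => ?_
  cases a <;> rfl

lemma weight_bidegreeWeight_fst_le {dvec : κ → ℕ} {d : ℕ} (hd : ∀ j, dvec j ≤ d)
    (s : ι ⊕ κ →₀ ℕ) :
    (Finsupp.weight (bidegreeWeight dvec) s).1 ≤
      Finsupp.weight (Sum.elim 1 0) s + d * Finsupp.weight (Sum.elim 0 1) s := by
  simp only [Finsupp.weight_apply, Finsupp.sum, Prod.fst_sum, Prod.smul_fst, Finset.mul_sum,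
    ← Finset.sum_add_distrib]
  refine Finset.sum_le_sum fun a _ => ?_
  cases a with
  | inl i => simp [bidegreeWeight]
  | inr j => simpa [bidegreeWeight, mul_comm d] using Nat.mul_le_mul_left (s (Sum.inr j)) (hd j)

lemma mem_irrelevantIdeal_pow_of_isWeightedHomogeneous {dvec : κ → ℕ} {d u : ℕ}
    (hd : ∀ j, dvec j ≤ d) {f : MvPolynomial (ι ⊕ κ) R} {m : ℕ × ℕ}
    (hf : f.IsWeightedHomogeneous (bidegreeWeight dvec) m) (hY : u ≤ m.2)
    (hX : d * m.2 + u ≤ m.1) : f ∈ irrelevantIdeal R ι κ ^ u := by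
  rw [f.as_sum]
  refine Ideal.sum_mem _ fun s hs => ?_
  have hw : Finsupp.weight (bidegreeWeight dvec) s = m := hf (mem_support_iff.mp hs)
  have hfst := weight_bidegreeWeight_fst_le hd s
  have hsnd := weight_bidegreeWeight_snd dvec s
  rw [hw] at hfst hsnd
  rw [← hsnd] at hfst
  exact monomial_mem_irrelevantIdeal_pow u s (by omega) (by omega) _

end MvPolynomial

section BigradedModule

variable {R σ L : Type*} [CommSemiring R] [AddCommGroup L] [Module (MvPolynomial σ R) L]

variable (R) in
def IsWeightedGradedSMul (w : σ → ℕ × ℕ) (ℳ : ℤ × ℤ → AddSubgroup L) : Prop :=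
  ∀ (v : ℕ × ℕ) (p : ℤ × ℤ), ∀ s ∈ weightedHomogeneousSubmodule R w v, ∀ x ∈ ℳ p,
    s • x ∈ ℳ (((v.1 : ℤ), (v.2 : ℤ)) + p)

variable {w : σ → ℕ × ℕ} {ℳ : ℤ × ℤ → AddSubgroup L} [DirectSum.Decomposition ℳ]

lemma IsWeightedGradedSMul.decompose_smul_eq_zero (hℳ : IsWeightedGradedSMul R w ℳ)
    {v p : ℤ × ℤ} {y : L} (hy : y ∈ ℳ v)
    (hkill : ∀ m : ℕ × ℕ, ((m.1 : ℤ), (m.2 : ℤ)) + v = p →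
      ∀ s ∈ weightedHomogeneousSubmodule R w m, s • y = 0)
    (s : MvPolynomial σ R) : (DirectSum.decompose ℳ (s • y) p : L) = 0 := by
  classical
  rw [← sum_weightedHomogeneousComponent w s,
    finsum_eq_sum _ (weightedHomogeneousComponent_finsupp s), Finset.sum_smul,
    DirectSum.decompose_sum, DFinsupp.finsetSum_apply, AddSubgroup.val_finsetSum]
  refine Finset.sum_eq_zero fun m _ => ?_
  have hm := weightedHomogeneousComponent_mem w s m
  by_cases hmv : ((m.1 : ℤ), (m.2 : ℤ)) + v = p
  · rw [hkill m hmv _ hm, DirectSum.decompose_zero]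
    rfl
  · exact DirectSum.decompose_of_mem_ne ℳ (hℳ m v _ hm y hy) hmv

lemma IsWeightedGradedSMul.eq_bot_of_span_eq_top (hℳ : IsWeightedGradedSMul R w ℳ)
    {G : Finset L} (hG : Submodule.span (MvPolynomial σ R) (G : Set L) = ⊤) {p : ℤ × ℤ}
    (hkill : ∀ g ∈ G, ∀ v, DirectSum.decompose ℳ g v ≠ 0 → ∀ m : ℕ × ℕ,
      ((m.1 : ℤ), (m.2 : ℤ)) + v = p →
      ∀ s ∈ weightedHomogeneousSubmodule R w m, s • (DirectSum.decompose ℳ g v : L) = 0) :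
    ℳ p = ⊥ := by
  classical
  rw [AddSubgroup.eq_bot_iff_forall]
  intro x hx
  obtain ⟨f, -, rfl⟩ := Submodule.mem_span_finset.mp (hG ▸ Submodule.mem_top :
    x ∈ Submodule.span (MvPolynomial σ R) (G : Set L))
  rw [← DirectSum.decompose_of_mem_same ℳ hx, DirectSum.decompose_sum, DFinsupp.finsetSum_apply,
    AddSubgroup.val_finsetSum]
  refine Finset.sum_eq_zero fun g hg => ?_
  rw [← DirectSum.sum_support_decompose ℳ g, Finset.smul_sum, DirectSum.decompose_sum,
    DFinsupp.finsetSum_apply, AddSubgroup.val_finsetSum]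
  exact Finset.sum_eq_zero fun v hv => hℳ.decompose_smul_eq_zero
    (DirectSum.decompose ℳ g v).2 (hkill g hg v (DFinsupp.mem_support_iff.mp hv)) _

end BigradedModule

/-- Bigraded Nakayama-type vanishing: let `S = k[X₁,…,Xₙ,Y₁,…,Y_r]` be bigraded by the
weights `w(Xᵢ) = (1,0)`, `w(Yⱼ) = (dⱼ,1)`, let `d = max dⱼ`, and let `L` be a finitely
generated bigraded `S`-module annihilated by a power of the irrelevant ideal
`S₊ = (XᵢYⱼ)`.  Then there are integers `m₁, m₂` with `L_{(p,q)} = 0` whenever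
`p > dq + m₁` and `q > m₂`. -/
theorem stmt5 {k : Type*} [Field k]
    (n r : ℕ) (dvec : Fin r → ℕ) (d : ℕ) (hd : d = Finset.univ.sup dvec)
    (w : Fin n ⊕ Fin r → ℕ × ℕ)
    (hw : w = Sum.elim (fun _ => (1, 0)) (fun j => (dvec j, 1)))
    (L : Type*) [AddCommGroup L]
    [Module (MvPolynomial (Fin n ⊕ Fin r) k) L]
    [Module.Finite (MvPolynomial (Fin n ⊕ Fin r) k) L]
    (ℳ : ℤ × ℤ → AddSubgroup L) [DirectSum.Decomposition ℳ]
    (hsmul : ∀ (v : ℕ × ℕ) (p : ℤ × ℤ),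
      ∀ s ∈ weightedHomogeneousSubmodule k w v, ∀ x ∈ ℳ p,
        s • x ∈ ℳ (((v.1 : ℤ), (v.2 : ℤ)) + p))
    (Splus : Ideal (MvPolynomial (Fin n ⊕ Fin r) k))
    (hSplus : Splus = Ideal.span {f | ∃ i j, f = X (Sum.inl i) * X (Sum.inr j)})
    (u : ℕ)
    (hann : Splus ^ u • (⊤ : Submodule (MvPolynomial (Fin n ⊕ Fin r) k) L) = ⊥) :
    ∃ m₁ m₂ : ℤ, ∀ p q : ℤ, (d : ℤ) * q + m₁ < p → m₂ < q → ℳ (p, q) = ⊥ := by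
  classical
  obtain ⟨G, hG⟩ := Module.Finite.fg_top (R := MvPolynomial (Fin n ⊕ Fin r) k) (M := L)
  obtain ⟨M, hM⟩ := ((G.biUnion fun g => (DirectSum.decompose ℳ g).support).image
    fun v : ℤ × ℤ => (v.1 - d * v.2, v.2)).exists_le
  refine ⟨u + M.1, u + M.2, fun p q hp hq =>
    IsWeightedGradedSMul.eq_bot_of_span_eq_top hsmul hG ?_⟩
  intro g hg v hv m hmv s hs
  have hvM := hM _ (Finset.mem_image_of_mem _ (Finset.mem_biUnion.mpr
    ⟨g, hg, DFinsupp.mem_support_iff.mpr hv⟩))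
  have hq' : (m.2 : ℤ) + v.2 = q := congrArg Prod.snd hmv
  have hp' : (m.1 : ℤ) + v.1 = p := congrArg Prod.fst hmv
  have hY : u ≤ m.2 := by
    have := hvM.2
    omega
  have hX : d * m.2 + u ≤ m.1 := by
    have := hvM.1
    have : (d : ℤ) * q = d * m.2 + d * v.2 := by rw [← hq']; ring
    zify
    linarith
  have hs' : s ∈ Splus ^ u := by
    subst hSplus hw
    exact mem_irrelevantIdeal_pow_of_isWeightedHomogeneous
      (fun j => hd ▸ Finset.le_sup (Finset.mem_univ j)) hs hY hX
  exact Submodule.mem_annihilator.mp (Submodule.le_annihilator_iff.mpr hann hs') _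
    Submodule.mem_top
end

section
/- Fix integers n, r ≥ 1, nonnegative integers d₁,…,d_r with d = max_j d_j, positive integers c, e with c ≥ de+1, and integers a, b, s. Then the following are equivalent: (1) there exist α ∈ ℤⁿ with α_i ≤ −1 for all i and β ∈ ℕ^r such that α₁+⋯+αₙ + d₁β₁+⋯+d_rβ_r = a + cs and β₁+⋯+β_r = b + es; (2) es ≥ −b and (c − ed)·s ≤ bd − a − n. -/
/-- Combinatorial description of the support of the diagonal of `H^n_{𝓜₁}(S(a,b))`:
for `d = max dⱼ` and a diagonal `Δ = (c,e)` with `c ≥ de + 1`, there exist exponents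
`α ∈ ℤⁿ` with all `αᵢ ≤ -1` and `β ∈ ℕʳ` with `Σαᵢ + Σdⱼβⱼ = a + cs` and `Σβⱼ = b + es`
if and only if `es ≥ -b` and `(c - ed)·s ≤ bd - a - n`. -/
theorem stmt6 (n r : ℕ) (hn : 1 ≤ n) (hr : 1 ≤ r)
    (dvec : Fin r → ℕ) (d : ℕ) (hd : d = Finset.univ.sup dvec)
    (c e : ℤ) (hc : 0 < c) (he : 0 < e)
    (hcde : (d : ℤ) * e + 1 ≤ c)
    (a b s : ℤ) :
    (∃ (α : Fin n → ℤ) (β : Fin r → ℕ),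
        (∀ i, α i ≤ -1) ∧
        ((∑ i, α i) + ∑ j, (dvec j : ℤ) * (β j : ℤ) = a + c * s) ∧
        ((∑ j, (β j : ℤ)) = b + e * s)) ↔
      (-b ≤ e * s ∧ (c - e * d) * s ≤ b * d - a - n) := by
  constructor
  · rintro ⟨α, β, hα, h1, h2⟩
    have hb : (0:ℤ) ≤ ∑ j, (β j : ℤ) := Finset.sum_nonneg fun j _ => Int.natCast_nonneg _
    constructor
    · linarith [h2 ▸ hb]
    · have hsumα : (∑ i, α i) ≤ -(n:ℤ) := by
        calc (∑ i, α i) ≤ ∑ _i : Fin n, (-1 : ℤ) :=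
              Finset.sum_le_sum fun i _ => hα i
          _ = -(n:ℤ) := by simp
      have hdj : ∀ j : Fin r, (dvec j : ℤ) ≤ (d:ℤ) := by
        intro j
        exact_mod_cast Nat.cast_le.mpr (hd ▸ Finset.le_sup (Finset.mem_univ j))
      have hsumβ : (∑ j, (dvec j : ℤ) * (β j : ℤ)) ≤ (d:ℤ) * (b + e * s) := by
        calc (∑ j, (dvec j : ℤ) * (β j : ℤ)) ≤ ∑ j, (d:ℤ) * (β j : ℤ) :=
              Finset.sum_le_sum fun j _ =>
                mul_le_mul_of_nonneg_right (hdj j) (Int.natCast_nonneg _)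
          _ = (d:ℤ) * (b + e * s) := by rw [← Finset.mul_sum, h2]
      nlinarith
  · rintro ⟨h1, h2⟩
    haveI : Nonempty (Fin r) := ⟨⟨0, hr⟩⟩
    obtain ⟨j0, -, hj0⟩ := Finset.exists_mem_eq_sup (Finset.univ : Finset (Fin r))
      Finset.univ_nonempty dvec
    have hi0 : ∃ i0 : Fin n, True := ⟨⟨0, hn⟩, trivial⟩
    obtain ⟨i0, -⟩ := hi0
    have hbes : (0:ℤ) ≤ b + e * s := by linarith
    set T : ℤ := a + c * s - (d:ℤ) * (b + e * s) with hT
    have hTn : T ≤ -(n:ℤ) := by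
      have : (c - e * d) * s = c * s - (d:ℤ) * (e * s) := by ring
      nlinarith
    refine ⟨fun i => if i = i0 then T + (n - 1) else -1,
      fun j => if j = j0 then (b + e * s).toNat else 0, ?_, ?_, ?_⟩
    · intro i
      have hb : (fun i : Fin n => if i = i0 then T + ((n:ℤ) - 1) else -1) i
          = if i = i0 then T + ((n:ℤ) - 1) else -1 := rfl
      rw [hb]
      by_cases h : i = i0
      · rw [if_pos h]; linarith
      · rw [if_neg h]
    · have hβsum : (∑ j, (dvec j : ℤ) * ((if j = j0 then (b + e * s).toNat else 0 : ℕ) : ℤ))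
          = (d:ℤ) * (b + e * s) := by
        rw [Finset.sum_eq_single j0]
        · rw [if_pos rfl, Int.toNat_of_nonneg hbes, hd, hj0]
        · intro j _ hj; simp [hj]
        · intro h; exact absurd (Finset.mem_univ j0) h
      have hsplit : ∀ i : Fin n, (if i = i0 then T + ((n:ℤ) - 1) else (-1:ℤ))
          = (if i = i0 then T + (n:ℤ) else 0) + (-1) := by
        intro i; by_cases h : i = i0 <;> simp [h] <;> ring
      have hαsum : (∑ i, (if i = i0 then T + ((n:ℤ) - 1) else (-1:ℤ))) = T := by
        rw [Finset.sum_congr rfl (fun i _ => hsplit i), Finset.sum_add_distrib,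
          Finset.sum_ite_eq' Finset.univ i0 (fun _ => T + (n:ℤ))]
        simp
      rw [hαsum, hβsum, hT]; ring
    · rw [Finset.sum_eq_single j0]
      · simp [Int.toNat_of_nonneg hbes]
      · intro j _ hj; simp [hj]
      · intro h; exact absurd (Finset.mem_univ j0) h
end

section
/- Fix integers n, r ≥ 1, nonnegative integers d₁,…,d_r with d = max_j d_j and u = d₁+⋯+d_r, positive integers c, e with c ≥ de+1, and integers a, b, s. Then the following are equivalent: (1) there exist α ∈ ℕⁿ and β ∈ ℤ^r with β_j ≤ −1 for all j such that α₁+⋯+αₙ + d₁β₁+⋯+d_rβ_r = a + cs and β₁+⋯+β_r = b + es; (2) es ≤ −b − r and (c − ed)·s ≥ (b+r)d − u − a. -/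
/-- Combinatorial description of the support of the diagonal of `H^r_{𝓜₂}(S(a,b))`:
for `d = max dⱼ`, `u = Σ dⱼ` and a diagonal `Δ = (c,e)` with `c ≥ de + 1`, there exist
exponents `α ∈ ℕⁿ` and `β ∈ ℤʳ` with all `βⱼ ≤ -1`, `Σαᵢ + Σdⱼβⱼ = a + cs` and
`Σβⱼ = b + es` if and only if `es ≤ -b - r` and `(c - ed)·s ≥ (b+r)d - u - a`. -/
theorem stmt7 (n r : ℕ) (hn : 1 ≤ n) (hr : 1 ≤ r)
    (dvec : Fin r → ℕ) (d u : ℕ)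
    (hd : d = Finset.univ.sup dvec) (hu : u = ∑ j, dvec j)
    (c e : ℤ) (hc : 0 < c) (he : 0 < e)
    (hcde : (d : ℤ) * e + 1 ≤ c)
    (a b s : ℤ) :
    (∃ (α : Fin n → ℕ) (β : Fin r → ℤ),
        (∀ j, β j ≤ -1) ∧
        ((∑ i, (α i : ℤ)) + ∑ j, (dvec j : ℤ) * β j = a + c * s) ∧
        ((∑ j, β j) = b + e * s)) ↔
      (e * s ≤ -b - r ∧ (b + r) * d - u - a ≤ (c - e * d) * s) := by
  haveI : Nonempty (Fin r) := ⟨⟨0, hr⟩⟩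
  have hdle : ∀ j, (dvec j : ℤ) ≤ d := by
    intro j
    exact_mod_cast Nat.cast_le.mpr (hd ▸ Finset.le_sup (Finset.mem_univ j))
  constructor
  · rintro ⟨α, β, hβ, h1, h2⟩
    have hαnn : 0 ≤ ∑ i, (α i : ℤ) :=
      Finset.sum_nonneg fun i _ => by positivity
    -- e*s ≤ -b-r : since each β j ≤ -1
    have hsum : (∑ j, β j) ≤ ∑ j : Fin r, (-1 : ℤ) :=
      Finset.sum_le_sum fun j _ => hβ j
    simp at hsum
    constructor
    · rw [h2] at hsum; linarith
    · -- termwise: d*(β j + 1) - dvec j ≤ dvec j * β j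
      have key : ∑ j, ((d : ℤ) * (β j + 1) - dvec j) ≤ ∑ j, (dvec j : ℤ) * β j := by
        apply Finset.sum_le_sum
        intro j _
        have h1 : β j + 1 ≤ 0 := by linarith [hβ j]
        have := mul_le_mul_of_nonpos_right (hdle j) h1
        nlinarith
      have hcalc : ∑ j, ((d : ℤ) * (β j + 1) - dvec j)
          = (d : ℤ) * ((∑ j, β j) + r) - u := by
        rw [Finset.sum_sub_distrib, ← Finset.mul_sum, Finset.sum_add_distrib]
        simp [hu, mul_add]
      rw [hcalc, h2] at key
      have : (d : ℤ) * (b + e * s + r) - u ≤ a + c * s := by linarith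
      nlinarith
  · rintro ⟨h1, h2⟩
    obtain ⟨j₀, -, hj₀⟩ := Finset.exists_mem_eq_sup Finset.univ Finset.univ_nonempty dvec
    have hdj₀ : (dvec j₀ : ℤ) = d := by rw [hd, hj₀]
    set B : ℤ := b + e * s + r with hB
    have hBle : B ≤ 0 := by linarith
    set A : ℤ := a + c * s - (B * d - u) with hA
    have hAnn : 0 ≤ A := by nlinarith
    refine ⟨fun i => if i = ⟨0, hn⟩ then A.toNat else 0,
      fun j => -1 + (if j = j₀ then B else 0), ?_, ?_, ?_⟩
    · intro j
      show -1 + (if j = j₀ then B else 0) ≤ -1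
      by_cases hj : j = j₀ <;> simp [hj] <;> linarith
    · have hα : (∑ i, ((if i = (⟨0, hn⟩ : Fin n) then A.toNat else 0 : ℕ) : ℤ)) = A := by
        simp only [apply_ite (Nat.cast : ℕ → ℤ), Nat.cast_zero]
        rw [Finset.sum_ite_eq' Finset.univ (⟨0, hn⟩ : Fin n)]
        simp [Int.toNat_of_nonneg hAnn]
      have hβs : (∑ j, (dvec j : ℤ) * (-1 + (if j = j₀ then B else 0)))
          = -u + d * B := by
        have : ∀ j, (dvec j : ℤ) * (-1 + (if j = j₀ then B else 0))
            = -(dvec j : ℤ) + (if j = j₀ then (dvec j : ℤ) * B else 0) := by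
          intro j; split <;> ring
        rw [Finset.sum_congr rfl fun j _ => this j, Finset.sum_add_distrib,
          Finset.sum_ite_eq' Finset.univ j₀]
        simp [hu, hdj₀]
      rw [hα, hβs, hA]
      ring
    · have : (∑ j, (-1 + (if j = j₀ then B else 0) : ℤ))
          = -r + B := by
        rw [Finset.sum_add_distrib, Finset.sum_ite_eq' Finset.univ j₀]
        simp
      rw [this, hB]; ring
end
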